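/- In the shock-surface setting, fix η ≠ 0, assume B > 0, and set N̄₀ := η R (A/(1 − k r²)) (E/C) (ψ C)⁻¹ and N̄₁ := η R / A. Then −(1/B) N̄₀² + A N̄₁² = η² R²/(1 − k r²). (That is, the squared length ⟨N̄, N̄⟩ of the transverse covector computed with the TOV inverse metric coefficients −1/B and A equals the squared length ⟨N, N⟩ = η²R²/(1 − kr²) computed on the FRW side, so the jump [⟨N, N⟩] across the shock vanishes.) -/
import Mathlib


open Real

/-- on the FRW/TOV shock surface, the squared length `⟨N̄, N̄⟩` of the
transverse covector computed with the TOV inverse metric coefficients `−1/B` and `A`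
equals the FRW-side squared length `η²R²/(1 − kr²)`; hence `[⟨N, N⟩] = 0`. -/
theorem stmt_18 (𝒢 k ρ R Rdot r rb M A C E ψ B η : ℝ)
    (h𝒢 : 0 < 𝒢) (hR : 0 < R) (hkr : 1 - k * r ^ 2 ≠ 0)
    (hrb : rb = R * r) (hrb0 : rb ≠ 0)
    (hFried : Rdot ^ 2 + k = 8 * π * 𝒢 / 3 * ρ * R ^ 2)
    (hM : M = 4 * π / 3 * ρ * rb ^ 3)
    (hA : A = 1 - 2 * 𝒢 * M / rb) (hA0 : A ≠ 0)
    (hC : C = R ^ 2 * (1 - 8 * π * 𝒢 / 3 * ρ * R ^ 2 * r ^ 2))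
    (hE : E = -(R * Rdot * rb))
    (hψ : ψ ≠ 0)
    (hmatch : B * (R ^ 2 - k * rb ^ 2) * ψ ^ 2 * C = 1)
    (hη : η ≠ 0) (hB : 0 < B) :
    -(1 / B) * (η * R * (A / (1 - k * r ^ 2)) * (E / C) * (ψ * C)⁻¹) ^ 2 +
        A * (η * R / A) ^ 2 =
      η ^ 2 * R ^ 2 / (1 - k * r ^ 2) := by
  have hr0 : r ≠ 0 := fun h => hrb0 (by rw [hrb, h, mul_zero])
  have hA' : A = 1 - (Rdot ^ 2 + k) * r ^ 2 := by
    rw [hA, hM, hFried, hrb]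
    field_simp
    ring
  have hC' : C = R ^ 2 * A := by
    rw [hC, hA', hFried]
  have hC0 : C ≠ 0 := by
    rw [hC']; exact mul_ne_zero (pow_ne_zero 2 (ne_of_gt hR)) hA0
  have hB0 : B ≠ 0 := ne_of_gt hB
  have h1B : 1 / B = R ^ 2 * (1 - k * r ^ 2) * ψ ^ 2 * C := by
    have : R ^ 2 - k * rb ^ 2 = R ^ 2 * (1 - k * r ^ 2) := by rw [hrb]; ring
    rw [this] at hmatch
    field_simp
    linarith [hmatch]
  rw [h1B, hE, hC', hrb]
  have hR0 : R ≠ 0 := ne_of_gt hR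
  field_simp
  rw [hA']
  ring
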